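/- arXiv:2001.00152 — 3 statements merged into one kernel-verified Lean document; each statement's English description precedes it below -/
import Mathlib

section
/- Let P, Q, λ, s, t be nonnegative reals, n a positive integer, and m > d/2 with d ≥ 1. Suppose there exist positive constants a₁, a₂, a₃ such that P² + a₁·λ·Q² ≤ a₂·s·λ·P + a₃·t·n^{-1/2}·P^{1-d/(2m)}·Q^{d/(2m)}. Then there exist positive constants c₁, c₂, c₃, c₄ (depending only on a₁, a₂, a₃, d, m) such that P ≤ max(c₁·s·λ, c₂·t·n^{-1/2}·λ^{-d/(4m)}) and Q ≤ max(c₃·s·λ^{1/2}, c₄·t·n^{-1/2}·λ^{-(2m+d)/(4m)}). -/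
/-!
Put `κ = a₁λ`, `θ = d/(2m) ∈ [0, 1]` and `R = √(P² + κQ²)`. Both `P` and `√κ·Q` are at most `R`,
so the interpolation term `P^(1-θ) Q^θ` is at most `κ^(-θ/2) R`, and the hypothesis becomes
`R² ≤ (A + B κ^(-θ/2)) R`. Hence `R`, and with it `P` and `√κ·Q`, is at most twice the larger
of `A` and `B κ^(-θ/2)`.
-/

open Real

lemma rpow_one_sub_mul_rpow_le {x y r θ : ℝ} (hx : 0 ≤ x) (hy : 0 ≤ y) (hxr : x ≤ r)
    (hyr : y ≤ r) (hθ0 : 0 ≤ θ) (hθ1 : θ ≤ 1) : x ^ (1 - θ) * y ^ θ ≤ r := by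
  have hr : 0 ≤ r := hx.trans hxr
  calc x ^ (1 - θ) * y ^ θ ≤ r ^ (1 - θ) * r ^ θ := by gcongr
    _ = r := by rw [← rpow_add' hr (by simp), sub_add_cancel, rpow_one]

section OrderInequality

variable {P Q κ A B θ : ℝ}

lemma le_sqrt_sq_add_mul_sq (hP : 0 ≤ P) (hκ : 0 ≤ κ) : P ≤ √(P ^ 2 + κ * Q ^ 2) :=
  (le_sqrt hP (by positivity)).2 (by nlinarith)

lemma sqrt_mul_le_sqrt_sq_add_mul_sq (hQ : 0 ≤ Q) (hκ : 0 ≤ κ) :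
    √κ * Q ≤ √(P ^ 2 + κ * Q ^ 2) :=
  (le_sqrt (by positivity) (by positivity)).2 (by rw [mul_pow, sq_sqrt hκ]; nlinarith)

theorem sqrt_sq_add_mul_sq_le (hP : 0 ≤ P) (hQ : 0 ≤ Q) (hκ : 0 < κ) (hA : 0 ≤ A) (hB : 0 ≤ B)
    (hθ0 : 0 ≤ θ) (hθ1 : θ ≤ 1) (h : P ^ 2 + κ * Q ^ 2 ≤ A * P + B * P ^ (1 - θ) * Q ^ θ) :
    √(P ^ 2 + κ * Q ^ 2) ≤ A + B * κ ^ (-(θ / 2)) := by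
  set R := √(P ^ 2 + κ * Q ^ 2)
  have hκθ : √κ ^ θ * κ ^ (-(θ / 2)) = 1 := by
    rw [sqrt_eq_rpow, ← rpow_mul hκ.le, ← rpow_add hκ]; ring_nf; exact rpow_zero κ
  have hinterp : P ^ (1 - θ) * Q ^ θ ≤ κ ^ (-(θ / 2)) * R := by
    have := rpow_one_sub_mul_rpow_le hP (by positivity) (le_sqrt_sq_add_mul_sq hP hκ.le)
      (sqrt_mul_le_sqrt_sq_add_mul_sq hQ hκ.le) hθ0 hθ1
    rw [mul_rpow (sqrt_nonneg κ) hQ] at this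
    calc P ^ (1 - θ) * Q ^ θ = κ ^ (-(θ / 2)) * (P ^ (1 - θ) * (√κ ^ θ * Q ^ θ)) := by
          linear_combination -(P ^ (1 - θ) * Q ^ θ) * hκθ
      _ ≤ κ ^ (-(θ / 2)) * R := by gcongr
  have hR2 : R ^ 2 ≤ (A + B * κ ^ (-(θ / 2))) * R := by
    rw [sq_sqrt (by positivity)]
    calc P ^ 2 + κ * Q ^ 2 ≤ A * P + B * (P ^ (1 - θ) * Q ^ θ) := by linarith
      _ ≤ A * R + B * (κ ^ (-(θ / 2)) * R) := by gcongr; exact le_sqrt_sq_add_mul_sq hP hκ.le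
      _ = _ := by ring
  have : 0 ≤ A + B * κ ^ (-(θ / 2)) := by positivity
  nlinarith [sqrt_nonneg (P ^ 2 + κ * Q ^ 2)]

theorem le_max_of_sq_add_mul_sq_le (hP : 0 ≤ P) (hQ : 0 ≤ Q) (hκ : 0 < κ) (hA : 0 ≤ A)
    (hB : 0 ≤ B) (hθ0 : 0 ≤ θ) (hθ1 : θ ≤ 1)
    (h : P ^ 2 + κ * Q ^ 2 ≤ A * P + B * P ^ (1 - θ) * Q ^ θ) :
    P ≤ max (2 * A) (2 * B * κ ^ (-(θ / 2))) ∧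
      Q ≤ max (2 * A * κ ^ (-(1 / 2 : ℝ))) (2 * B * κ ^ (-((1 + θ) / 2))) := by
  have hR : √(P ^ 2 + κ * Q ^ 2) ≤ max (2 * A) (2 * B * κ ^ (-(θ / 2))) := by
    have := sqrt_sq_add_mul_sq_le hP hQ hκ hA hB hθ0 hθ1 h
    have := le_max_left (2 * A) (2 * B * κ ^ (-(θ / 2)))
    have := le_max_right (2 * A) (2 * B * κ ^ (-(θ / 2)))
    linarith
  refine ⟨(le_sqrt_sq_add_mul_sq hP hκ.le).trans hR, ?_⟩
  have hκ_half : κ ^ (-(1 / 2 : ℝ)) * √κ = 1 := by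
    rw [sqrt_eq_rpow, ← rpow_add hκ]; norm_num
  have hκ_exp : κ ^ (-(θ / 2)) * κ ^ (-(1 / 2 : ℝ)) = κ ^ (-((1 + θ) / 2)) := by
    rw [← rpow_add hκ]; ring_nf
  calc Q = κ ^ (-(1 / 2 : ℝ)) * (√κ * Q) := by rw [← mul_assoc, hκ_half, one_mul]
    _ ≤ κ ^ (-(1 / 2 : ℝ)) * max (2 * A) (2 * B * κ ^ (-(θ / 2))) := by
        gcongr; exact (sqrt_mul_le_sqrt_sq_add_mul_sq hQ hκ.le).trans hR
    _ = max (2 * A * κ ^ (-(1 / 2 : ℝ))) (2 * B * κ ^ (-((1 + θ) / 2))) := by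
        rw [mul_max_of_nonneg _ _ (by positivity), ← hκ_exp]; ring_nf

end OrderInequality

theorem stmt_0_general (d : ℕ) (m a1 a2 a3 : ℝ) (hm : (d : ℝ) / 2 < m)
    (ha1 : 0 < a1) (ha2 : 0 < a2) (ha3 : 0 < a3) :
    ∃ c1 c2 c3 c4 : ℝ, 0 < c1 ∧ 0 < c2 ∧ 0 < c3 ∧ 0 < c4 ∧
      ∀ (P Q lam s t : ℝ) (n : ℕ), 0 ≤ P → 0 ≤ Q → 0 < lam → 0 ≤ s → 0 ≤ t → 1 ≤ n →
        P ^ 2 + a1 * lam * Q ^ 2 ≤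
          a2 * s * lam * P +
            a3 * t * (n : ℝ) ^ (-(1 / 2 : ℝ)) *
              P ^ (1 - (d : ℝ) / (2 * m)) * Q ^ ((d : ℝ) / (2 * m)) →
        P ≤ max (c1 * s * lam)
              (c2 * t * (n : ℝ) ^ (-(1 / 2 : ℝ)) * lam ^ (-((d : ℝ) / (4 * m)))) ∧
        Q ≤ max (c3 * s * lam ^ ((1 : ℝ) / 2))
              (c4 * t * (n : ℝ) ^ (-(1 / 2 : ℝ)) *
                lam ^ (-((2 * m + (d : ℝ)) / (4 * m)))) := by
  have hm0 : 0 < m := lt_of_le_of_lt (by positivity) hm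
  set θ : ℝ := (d : ℝ) / (2 * m) with hθ
  have hθ1 : θ ≤ 1 := by rw [div_le_one (by positivity)]; linarith
  have hθ_half : (d : ℝ) / (4 * m) = θ / 2 := by rw [hθ]; field_simp; ring
  have hθ_succ : (2 * m + (d : ℝ)) / (4 * m) = (1 + θ) / 2 := by rw [hθ]; field_simp; ring
  refine ⟨2 * a2, 2 * a3 * a1 ^ (-(θ / 2)), 2 * a2 * a1 ^ (-(1 / 2 : ℝ)),
    2 * a3 * a1 ^ (-((1 + θ) / 2)), by positivity, by positivity, by positivity, by positivity, ?_⟩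
  intro P Q lam s t n hP hQ hlam hs ht _ h
  obtain ⟨hPb, hQb⟩ := le_max_of_sq_add_mul_sq_le hP hQ (by positivity) (by positivity)
    (by positivity) (by positivity) hθ1 h
  simp only [mul_rpow ha1.le hlam.le] at hPb hQb
  have hlam_half : lam * lam ^ (-(1 / 2 : ℝ)) = lam ^ ((1 : ℝ) / 2) := by
    rw [← rpow_one_add' hlam.le (by norm_num)]; norm_num
  rw [hθ_half, hθ_succ]
  constructor
  · convert hPb using 2 <;> ring
  · convert hQb using 2
    · rw [← hlam_half]; ring
    · ring

/-- Lemma A.2 (order lemma): algebraic rate-extraction inequality. -/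
theorem stmt_0 (d : ℕ) (m a1 a2 a3 : ℝ) (hd : 1 ≤ d) (hm : (d : ℝ) / 2 < m)
    (ha1 : 0 < a1) (ha2 : 0 < a2) (ha3 : 0 < a3) :
    ∃ c1 c2 c3 c4 : ℝ, 0 < c1 ∧ 0 < c2 ∧ 0 < c3 ∧ 0 < c4 ∧
      ∀ (P Q lam s t : ℝ) (n : ℕ), 0 ≤ P → 0 ≤ Q → 0 < lam → 0 ≤ s → 0 ≤ t → 1 ≤ n →
        P ^ 2 + a1 * lam * Q ^ 2 ≤
          a2 * s * lam * P +
            a3 * t * (n : ℝ) ^ (-(1 / 2 : ℝ)) *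
              P ^ (1 - (d : ℝ) / (2 * m)) * Q ^ ((d : ℝ) / (2 * m)) →
        P ≤ max (c1 * s * lam)
              (c2 * t * (n : ℝ) ^ (-(1 / 2 : ℝ)) * lam ^ (-((d : ℝ) / (4 * m)))) ∧
        Q ≤ max (c3 * s * lam ^ ((1 : ℝ) / 2))
              (c4 * t * (n : ℝ) ^ (-(1 / 2 : ℝ)) *
                lam ^ (-((2 * m + (d : ℝ)) / (4 * m)))) :=
  stmt_0_general d m a1 a2 a3 hm ha1 ha2 ha3
end

section
/- Let H be a real Hilbert space, let f, f̂ ∈ H, let λ > 0, and let ‖·‖ₙ be a seminorm on a space containing f and f̂ arising from an inner product ⟨·,·⟩ₙ. Suppose the basic inequality ‖f̂ − f‖ₙ² + λ‖f̂‖² ≤ 2⟨e, f̂ − f⟩ₙ + λ‖f‖² holds (where ⟨e, ·⟩ₙ is a fixed linear functional). Suppose furthermore there exists v and a norm ‖·‖_{L₂} such that ⟨f, g⟩ = ⟨v, g⟩_{L₂} for all g ∈ H, where ⟨·,·⟩_{L₂} is an inner product with respect to which ‖·‖_{L₂} is the norm and f̂ − f lies in the L₂ space. Then the improved basic inequality holds: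 ‖f̂ − f‖ₙ² + λ‖f̂ − f‖² ≤ 2⟨e, f̂ − f⟩ₙ + 2λ‖v‖_{L₂}·‖f̂ − f‖_{L₂}. -/
open RealInnerProductSpace

section

variable {E : Type*} [NormedAddCommGroup E] [InnerProductSpace ℝ E]

theorem norm_sq_sub_norm_sq_eq_two_inner_add_norm_sub_sq (x y : E) :
    ‖x‖ ^ 2 - ‖y‖ ^ 2 = 2 * ⟪y, x - y⟫ + ‖x - y‖ ^ 2 := by
  have h := norm_add_sq_real y (x - y)
  rw [add_sub_cancel] at h
  linarith

theorem add_mul_norm_sub_sq_le_of_add_mul_norm_sq_le {a b c lam : ℝ} {x y : E} (hlam : 0 ≤ lam)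
    (h : a + lam * ‖x‖ ^ 2 ≤ b + lam * ‖y‖ ^ 2) (hc : -⟪y, x - y⟫ ≤ c) :
    a + lam * ‖x - y‖ ^ 2 ≤ b + 2 * lam * c := by
  have hxy := norm_sq_sub_norm_sq_eq_two_inner_add_norm_sub_sq x y
  nlinarith [mul_le_mul_of_nonneg_left hc hlam]

end

/-- The improved basic inequality (2.23), derived abstractly from the basic inequality
and the representation `⟨f, g⟩_H = ⟨v, ι g⟩_{L₂}`. -/
theorem stmt_7 {H L2 : Type*} [NormedAddCommGroup H] [InnerProductSpace ℝ H]
    [NormedAddCommGroup L2] [InnerProductSpace ℝ L2]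
    (ι : H →ₗ[ℝ] L2) (N : H → ℝ) (E : H →ₗ[ℝ] ℝ) (f fhat : H) (v : L2)
    (lam : ℝ) (hlam : 0 < lam)
    (hrep : ∀ g : H, ⟪f, g⟫ = ⟪v, ι g⟫)
    (hbasic : N (fhat - f) ^ 2 + lam * ‖fhat‖ ^ 2 ≤ 2 * E (fhat - f) + lam * ‖f‖ ^ 2) :
    N (fhat - f) ^ 2 + lam * ‖fhat - f‖ ^ 2 ≤
      2 * E (fhat - f) + 2 * lam * ‖v‖ * ‖ι (fhat - f)‖ := by
  have hcs : -⟪f, fhat - f⟫ ≤ ‖v‖ * ‖ι (fhat - f)‖ := by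
    rw [hrep]
    exact neg_le.mp (abs_le.mp (abs_real_inner_le_norm v _)).1
  rw [mul_assoc (2 * lam)]
  exact add_mul_norm_sub_sq_le_of_add_mul_norm_sq_le hlam.le hbasic hcs
end

section
/- Let H be a real Hilbert space, Ω a measure space with L²(Ω) containing H-elements via a linear embedding ι, and suppose f ∈ H satisfies ⟨f, g⟩_H = ⟨v, ι(g)⟩_{L²} for all g ∈ H, for some fixed v ∈ L²(Ω). Let s ∈ H satisfy the orthogonality condition ⟨f − s, s⟩_H = 0 and the sampling inequality ‖ι(f − s)‖_{L²} ≤ ε·‖f − s‖_H for some ε > 0. Then ‖f − s‖_{L²} ≤ ε²·‖v‖_{L²} and ‖f − s‖_H ≤ ε·‖v‖_{L²}. -/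
open RealInnerProductSpace

/-
Galerkin orthogonality turns the energy of the error into a pairing with the data:
‖f - s‖²_H = ⟪f, f - s⟫_H = ⟪v, ι (f - s)⟫.  Cauchy–Schwarz and the sampling inequality
bound this by ε ‖v‖ ‖f - s‖_H, so ‖f - s‖_H ≤ ε ‖v‖; applying the sampling inequality
once more gains the second factor ε in the weaker norm.
-/

theorem norm_sub_sq_eq_inner_of_inner_sub_eq_zero {E : Type*} [NormedAddCommGroup E]
    [InnerProductSpace ℝ E] {f s : E} (h : ⟪f - s, s⟫ = 0) : ‖f - s‖ ^ 2 = ⟪f, f - s⟫ := by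
  rw [← real_inner_self_eq_norm_sq, real_inner_comm _ f, inner_sub_right, h, sub_zero]

theorem le_of_sq_le_mul_self {a b : ℝ} (hb : 0 ≤ b) (h : a ^ 2 ≤ b * a) : a ≤ b := by
  rcases le_or_gt a 0 with ha | ha
  · exact ha.trans hb
  · exact le_of_mul_le_mul_right (by rwa [← sq]) ha

theorem stmt_12_general {H L2 : Type*} [NormedAddCommGroup H] [InnerProductSpace ℝ H]
    [NormedAddCommGroup L2] [InnerProductSpace ℝ L2]
    (ι : H →ₗ[ℝ] L2) (f s : H) (v : L2) (ε : ℝ) (hε : 0 < ε)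
    (hrep : ∀ g : H, ⟪f, g⟫ = ⟪v, ι g⟫)
    (horth : ⟪f - s, s⟫ = 0)
    (hsamp : ‖ι (f - s)‖ ≤ ε * ‖f - s‖) :
    ‖ι (f - s)‖ ≤ ε ^ 2 * ‖v‖ ∧ ‖f - s‖ ≤ ε * ‖v‖ := by
  have hH : ‖f - s‖ ≤ ε * ‖v‖ := by
    refine le_of_sq_le_mul_self (by positivity) ?_
    calc ‖f - s‖ ^ 2 = ⟪v, ι (f - s)⟫ := by
          rw [norm_sub_sq_eq_inner_of_inner_sub_eq_zero horth, hrep]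
      _ ≤ ‖v‖ * ‖ι (f - s)‖ := real_inner_le_norm _ _
      _ ≤ ‖v‖ * (ε * ‖f - s‖) := by gcongr
      _ = ε * ‖v‖ * ‖f - s‖ := by ring
  refine ⟨?_, hH⟩
  calc ‖ι (f - s)‖ ≤ ε * ‖f - s‖ := hsamp
    _ ≤ ε * (ε * ‖v‖) := by gcongr
    _ = ε ^ 2 * ‖v‖ := by ring

/-- Abstract improved interpolation error bound (Section 2.3). -/
theorem stmt_12 {H L2 : Type*} [NormedAddCommGroup H] [InnerProductSpace ℝ H]
    [NormedAddCommGroup L2] [InnerProductSpace ℝ L2] [CompleteSpace H]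
    (ι : H →ₗ[ℝ] L2) (f s : H) (v : L2) (ε : ℝ) (hε : 0 < ε)
    (hrep : ∀ g : H, ⟪f, g⟫ = ⟪v, ι g⟫)
    (horth : ⟪f - s, s⟫ = 0)
    (hsamp : ‖ι (f - s)‖ ≤ ε * ‖f - s‖) :
    ‖ι (f - s)‖ ≤ ε ^ 2 * ‖v‖ ∧ ‖f - s‖ ≤ ε * ‖v‖ :=
  stmt_12_general ι f s v ε hε hrep horth hsamp
end
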